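/- arXiv:2002.07685 — 3 statements merged into one kernel-verified Lean document; each statement's English description precedes it below -/
import Mathlib

section
/- Let n > 2 be an integer and C > 1 a constant, and for each σ ∈ [0,1] let y_σ : [0,∞) → ℝ be a C¹ function solving on (0,∞) the ordinary differential equation (2/(n(1−y²))) · (y/r) · ( y'/(1−y²) + ((n−2)/2)(y/r) ) = (C − σ/√(1−y²))², with y_σ(0) = 0, 0 ≤ y_σ(r) < √(1 − σ²/C²), y_σ' > 0 on [0,∞), and y_σ'(0) = C − σ. Then: (i) if σ, σ' ∈ [0,1] with σ < σ', then y_σ(r) > y_{σ'}(r) for all r ∈ (0,∞); (ii) for every R > 0 there exists a constant c₀ = c₀(n, C, R) > 0 such that for all σ ∈ (0,1], 0 ≤ y_σ(R) ≤ √(1 − σ²/(C − c₀)²). -/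
/-!
(i) The difference `g = y_σ - y_σ'` vanishes at `0` with `g'(0) = σ' - σ > 0`. At a first
positive zero `t` of `g` both solutions take the same value `Y`, and the left-hand side of the
equation is strictly increasing in `y'`; since `(C - σ/√(1-Y²))² > (C - σ'/√(1-Y²))²`, this
forces `g'(t) > 0`, which is impossible at a first zero approached from above.

(ii) Dropping the nonnegative `y'`-term and the factor `1/(1-y²) ≥ 1` in the equation gives
`((n-2)/n) (y/r)² ≤ (C - σ/√(1-y²))²`. Hence `σ/√(1-y_σ(R)²) ≤ C - c₀` with
`c₀ = √((n-2)/n) y_1(R)/R`, because `y_σ(R) ≥ y_1(R)` by (i).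
-/

open Set Filter Topology

lemma div_sqrt_one_sub_sq_lt_iff {u σ K : ℝ} (hu : 0 ≤ u) (hu1 : u ^ 2 < 1) (hσ : 0 ≤ σ)
    (hK : 0 < K) : σ / √(1 - u ^ 2) < K ↔ u < √(1 - σ ^ 2 / K ^ 2) := by
  rw [div_lt_iff₀ (Real.sqrt_pos.2 (by linarith)), ← div_lt_iff₀' hK,
    Real.lt_sqrt (by positivity), Real.lt_sqrt hu, div_pow, lt_sub_comm]

lemma div_sqrt_one_sub_sq_le_iff {u σ K : ℝ} (hu : 0 < u) (hu1 : u ^ 2 < 1) (hσ : 0 ≤ σ)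
    (hK : 0 < K) : σ / √(1 - u ^ 2) ≤ K ↔ u ≤ √(1 - σ ^ 2 / K ^ 2) := by
  rw [div_le_iff₀ (Real.sqrt_pos.2 (by linarith)), ← div_le_iff₀' hK,
    Real.le_sqrt (by positivity) (by linarith), Real.le_sqrt' hu, div_pow, le_sub_comm]

lemma eventually_pos_of_hasDerivWithinAt_Ici {g : ℝ → ℝ} {a d : ℝ}
    (hd : HasDerivWithinAt g d (Ici a) a) (hd0 : 0 < d) (ha : g a = 0) :
    ∀ᶠ r in 𝓝[>] a, 0 < g r := by
  have hslope := hasDerivWithinAt_iff_tendsto_slope.1 hd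
  rw [Ici_sdiff_left] at hslope
  filter_upwards [hslope.eventually (eventually_gt_nhds hd0), self_mem_nhdsWithin] with r hr hra
  exact pos_of_slope_pos hra hr ha

lemma exists_eq_zero_forall_Ioo_pos {g : ℝ → ℝ} {a b : ℝ} (hab : a < b)
    (hg : ContinuousOn g (Icc a b)) (ha : ∀ᶠ r in 𝓝[>] a, 0 < g r) (hb : g b ≤ 0) :
    ∃ t ∈ Ioc a b, g t = 0 ∧ ∀ r ∈ Ioo a t, 0 < g r := by
  obtain ⟨u, hau, hu⟩ := mem_nhdsGT_iff_exists_Ioo_subset.1 ha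
  set S := Icc (min u b) b ∩ g ⁻¹' Iic 0
  have hS : IsClosed S := (hg.mono (Icc_subset_Icc_left (le_min hau.le hab.le)))
    |>.preimage_isClosed_of_isClosed isClosed_Icc isClosed_Iic
  have hSbdd : BddBelow S := ⟨min u b, fun r hr ↦ hr.1.1⟩
  have htS : sInf S ∈ S := hS.csInf_mem ⟨b, ⟨min_le_right u b, le_rfl⟩, hb⟩ hSbdd
  set t := sInf S
  have hat : a < t := (lt_min hau hab).trans_le htS.1.1
  have hpos : ∀ r ∈ Ioo a t, 0 < g r := by
    intro r hr
    by_cases hru : r < u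
    · exact hu ⟨hr.1, hru⟩
    by_contra! hgr
    have hrS : r ∈ S := ⟨⟨(min_le_left u b).trans (not_lt.1 hru), hr.2.le.trans htS.1.2⟩, hgr⟩
    exact (csInf_le hSbdd hrS).not_gt hr.2
  have hcont : Tendsto g (𝓝[<] t) (𝓝 (g t)) := by
    rw [← nhdsWithin_Ioo_eq_nhdsLT hat]
    exact (hg t ⟨hat.le, htS.1.2⟩).mono (Ioo_subset_Icc_self.trans (Icc_subset_Icc_right htS.1.2))
  have hgt : 0 ≤ g t := ge_of_tendsto hcont <| by
    filter_upwards [Ioo_mem_nhdsLT hat] with r hr using (hpos r hr).le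
  exact ⟨t, ⟨hat, htS.1.2⟩, le_antisymm htS.2 hgt, hpos⟩

lemma pos_of_deriv_pos_of_eq_zero {g : ℝ → ℝ} {a : ℝ} (hg : ContinuousOn g (Ici a))
    (ha : ∀ᶠ r in 𝓝[>] a, 0 < g r) (hzero : ∀ t > a, g t = 0 → 0 < deriv g t) {b : ℝ}
    (hab : a < b) : 0 < g b := by
  by_contra! hb
  obtain ⟨t, ⟨hat, -⟩, hgt, hpos⟩ :=
    exists_eq_zero_forall_Ioo_pos hab (hg.mono Icc_subset_Ici_self) ha hb
  have hsign := eventually_nhdsWithin_sign_eq_of_deriv_pos (hzero t hat hgt) hgt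
  obtain ⟨r, hr, hrt⟩ :=
    ((hsign.filter_mono nhdsWithin_le_nhds).and (Ioo_mem_nhdsLT hat)).exists
  rw [sign_pos (hpos r hrt), sign_neg (sub_neg.2 hrt.2)] at hr
  exact absurd hr (by decide)

/-- Left-hand side of the equation at radius `r`, with `u, u'` in place of `y(r), y'(r)`. -/
noncomputable def solitonOperator (n : ℕ) (r u u' : ℝ) : ℝ :=
  2 / ((n : ℝ) * (1 - u ^ 2)) * (u / r) * (u' / (1 - u ^ 2) + ((n : ℝ) - 2) / 2 * (u / r))

lemma solitonOperator_strictMono {n : ℕ} (hn : 0 < n) {r u : ℝ} (hr : 0 < r) (hu : 0 < u)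
    (hu1 : u ^ 2 < 1) : StrictMono (solitonOperator n r u) := by
  have hn' : (0 : ℝ) < n := by exact_mod_cast hn
  have hu1' : 0 < 1 - u ^ 2 := by linarith
  intro a b hab
  unfold solitonOperator
  gcongr

lemma mul_div_sq_le_solitonOperator {n : ℕ} (hn : 2 ≤ n) {r u u' : ℝ} (hr : 0 < r)
    (hu : 0 ≤ u) (hu1 : u ^ 2 < 1) (hu' : 0 ≤ u') :
    ((n : ℝ) - 2) / n * (u / r) ^ 2 ≤ solitonOperator n r u u' := by
  have hn' : (2 : ℝ) ≤ n := by exact_mod_cast hn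
  have hu1' : 0 < 1 - u ^ 2 := by linarith
  have hsplit : solitonOperator n r u u' =
      2 * u * u' / (n * (1 - u ^ 2) ^ 2 * r) + ((n : ℝ) - 2) / n * (u / r) ^ 2 / (1 - u ^ 2) := by
    unfold solitonOperator
    field_simp
  have hdiv : ((n : ℝ) - 2) / n * (u / r) ^ 2 ≤ ((n : ℝ) - 2) / n * (u / r) ^ 2 / (1 - u ^ 2) :=
    le_div_self (by positivity) hu1' (by nlinarith)
  have hderiv : 0 ≤ 2 * u * u' / (n * (1 - u ^ 2) ^ 2 * r) := by positivity
  linarith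

structure IsRadialSoliton (n : ℕ) (C σ : ℝ) (f : ℝ → ℝ) : Prop where
  contDiffOn : ContDiffOn ℝ 1 f (Ici 0)
  map_zero : f 0 = 0
  ode : ∀ r > 0, solitonOperator n r (f r) (deriv f r) = (C - σ / √(1 - f r ^ 2)) ^ 2
  nonneg : ∀ r ≥ 0, 0 ≤ f r
  lt_sqrt : ∀ r ≥ 0, f r < √(1 - σ ^ 2 / C ^ 2)
  derivWithin_pos : ∀ r ≥ 0, 0 < derivWithin f (Ici 0) r
  derivWithin_zero : derivWithin f (Ici 0) 0 = C - σ

namespace IsRadialSoliton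

variable {n : ℕ} {C σ r : ℝ} {f : ℝ → ℝ}

lemma lt_const (h : IsRadialSoliton n C σ f) : σ < C :=
  sub_pos.1 (h.derivWithin_zero ▸ h.derivWithin_pos 0 le_rfl)

lemma hasDerivWithinAt_zero (h : IsRadialSoliton n C σ f) :
    HasDerivWithinAt f (C - σ) (Ici 0) 0 :=
  h.derivWithin_zero ▸ (h.contDiffOn.differentiableOn one_ne_zero 0 self_mem_Ici).hasDerivWithinAt

lemma hasDerivAt (h : IsRadialSoliton n C σ f) (hr : 0 < r) : HasDerivAt f (deriv f r) r :=
  ((h.contDiffOn.differentiableOn one_ne_zero).differentiableAt (Ici_mem_nhds hr)).hasDerivAt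

lemma deriv_pos (h : IsRadialSoliton n C σ f) (hr : 0 < r) : 0 < deriv f r := by
  simpa only [derivWithin_of_mem_nhds (Ici_mem_nhds hr)] using h.derivWithin_pos r hr.le

lemma strictMonoOn (h : IsRadialSoliton n C σ f) : StrictMonoOn f (Ici 0) :=
  strictMonoOn_of_deriv_pos (convex_Ici 0) h.contDiffOn.continuousOn fun _ hx ↦
    h.deriv_pos (by rwa [interior_Ici] at hx)

lemma pos (h : IsRadialSoliton n C σ f) (hr : 0 < r) : 0 < f r :=
  h.map_zero ▸ h.strictMonoOn self_mem_Ici hr.le hr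

lemma sq_lt_one (h : IsRadialSoliton n C σ f) (hr : 0 ≤ r) : f r ^ 2 < 1 :=
  ((Real.lt_sqrt (h.nonneg r hr)).1 (h.lt_sqrt r hr)).trans_le (sub_le_self _ (by positivity))

lemma div_sqrt_lt (h : IsRadialSoliton n C σ f) (hσ : 0 ≤ σ) (hr : 0 ≤ r) :
    σ / √(1 - f r ^ 2) < C :=
  (div_sqrt_one_sub_sq_lt_iff (h.nonneg r hr) (h.sq_lt_one hr) hσ (hσ.trans_lt h.lt_const)).2
    (h.lt_sqrt r hr)

theorem lt_of_lt_param {σ' : ℝ} {f' : ℝ → ℝ} (hn : 0 < n) (h : IsRadialSoliton n C σ f)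
    (h' : IsRadialSoliton n C σ' f') (hσ : 0 ≤ σ) (hσσ' : σ < σ') (hr : 0 < r) : f' r < f r := by
  have hd0 : HasDerivWithinAt (fun x ↦ f x - f' x) (σ' - σ) (Ici 0) 0 := by
    rw [show σ' - σ = (C - σ) - (C - σ') by ring]
    exact h.hasDerivWithinAt_zero.sub h'.hasDerivWithinAt_zero
  refine sub_pos.1 (pos_of_deriv_pos_of_eq_zero (h.contDiffOn.continuousOn.sub
    h'.contDiffOn.continuousOn) (eventually_pos_of_hasDerivWithinAt_Ici hd0 (sub_pos.2 hσσ')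
    (by simp [h.map_zero, h'.map_zero])) ?_ hr)
  intro t ht hft
  have heq : f' t = f t := (sub_eq_zero.1 hft).symm
  rw [((h.hasDerivAt ht).sub (h'.hasDerivAt ht)).deriv, sub_pos,
    ← (solitonOperator_strictMono hn ht (h.pos ht) (h.sq_lt_one ht.le)).lt_iff_lt, h.ode t ht,
    ← heq, h'.ode t ht, heq]
  have hs : 0 < √(1 - f t ^ 2) := Real.sqrt_pos.2 (by linarith [h.sq_lt_one ht.le])
  have hσ'C : σ' / √(1 - f t ^ 2) < C := heq ▸ h'.div_sqrt_lt (hσ.trans hσσ'.le) ht.le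
  have hσσ's : σ / √(1 - f t ^ 2) < σ' / √(1 - f t ^ 2) := div_lt_div_of_pos_right hσσ' hs
  gcongr

theorem sqrt_mul_le_sub_div_sqrt (hn : 2 ≤ n) (h : IsRadialSoliton n C σ f) (hσ : 0 ≤ σ)
    (hr : 0 < r) : √(((n : ℝ) - 2) / n) / r * f r ≤ C - σ / √(1 - f r ^ 2) := by
  have hn' : (0 : ℝ) ≤ ((n : ℝ) - 2) / n := div_nonneg (by norm_cast; omega) n.cast_nonneg
  have hsq : (√(((n : ℝ) - 2) / n) / r * f r) ^ 2 ≤ (C - σ / √(1 - f r ^ 2)) ^ 2 := by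
    rw [← h.ode r hr]
    convert mul_div_sq_le_solitonOperator hn hr (h.nonneg r hr.le) (h.sq_lt_one hr.le)
      (h.deriv_pos hr).le using 1
    rw [mul_pow, div_pow, Real.sq_sqrt hn']
    ring
  exact (pow_le_pow_iff_left₀ (by positivity [h.nonneg r hr.le])
    (sub_pos.2 (h.div_sqrt_lt hσ hr.le)).le two_ne_zero).1 hsq

theorem le_sqrt_one_sub (hn : 2 ≤ n) (h : IsRadialSoliton n C σ f) (hσ : 0 < σ) (hr : 0 < r)
    {c : ℝ} (hc : c ≤ √(((n : ℝ) - 2) / n) / r * f r) : f r ≤ √(1 - σ ^ 2 / (C - c) ^ 2) := by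
  have hle : σ / √(1 - f r ^ 2) ≤ C - c := by
    linarith [h.sqrt_mul_le_sub_div_sqrt hn hσ.le hr]
  have hpos : 0 < σ / √(1 - f r ^ 2) :=
    div_pos hσ (Real.sqrt_pos.2 (by linarith [h.sq_lt_one hr.le]))
  exact (div_sqrt_one_sub_sq_le_iff (h.pos hr) (h.sq_lt_one hr.le) hσ.le
    (hpos.trans_le hle)).1 hle

end IsRadialSoliton

theorem stmt_11_general (n : ℕ) (hn : 2 < n) (C : ℝ) (y : ℝ → ℝ → ℝ)
    (hy : ∀ σ ∈ Icc (0 : ℝ) 1,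
      ContDiffOn ℝ 1 (y σ) (Ici 0) ∧
      y σ 0 = 0 ∧
      (∀ r > (0 : ℝ),
        2 / ((n : ℝ) * (1 - y σ r ^ 2)) * (y σ r / r) *
            (deriv (y σ) r / (1 - y σ r ^ 2) + ((n : ℝ) - 2) / 2 * (y σ r / r)) =
          (C - σ / Real.sqrt (1 - y σ r ^ 2)) ^ 2) ∧
      (∀ r ≥ (0 : ℝ), 0 ≤ y σ r ∧ y σ r < Real.sqrt (1 - σ ^ 2 / C ^ 2)) ∧
      (∀ r ≥ (0 : ℝ), 0 < derivWithin (y σ) (Ici 0) r) ∧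
      derivWithin (y σ) (Ici 0) 0 = C - σ) :
    (∀ σ ∈ Icc (0 : ℝ) 1, ∀ σ' ∈ Icc (0 : ℝ) 1, σ < σ' →
      ∀ r > (0 : ℝ), y σ' r < y σ r) ∧
    (∀ R > (0 : ℝ), ∃ c₀ : ℝ, 0 < c₀ ∧
      ∀ σ ∈ Ioc (0 : ℝ) 1,
        0 ≤ y σ R ∧ y σ R ≤ Real.sqrt (1 - σ ^ 2 / (C - c₀) ^ 2)) := by
  have hsol : ∀ σ ∈ Icc (0 : ℝ) 1, IsRadialSoliton n C σ (y σ) := fun σ hσ ↦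
    let ⟨hcd, h0, hode, hbd, hpos, hd0⟩ := hy σ hσ
    ⟨hcd, h0, hode, fun r hr ↦ (hbd r hr).1, fun r hr ↦ (hbd r hr).2, hpos, hd0⟩
  have hmono : ∀ σ ∈ Icc (0 : ℝ) 1, ∀ σ' ∈ Icc (0 : ℝ) 1, σ < σ' →
      ∀ r > (0 : ℝ), y σ' r < y σ r := fun σ hσ σ' hσ' hlt r hr ↦
    (hsol σ hσ).lt_of_lt_param (by omega) (hsol σ' hσ') hσ.1 hlt hr
  have h1 : (1 : ℝ) ∈ Icc (0 : ℝ) 1 := right_mem_Icc.2 zero_le_one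
  refine ⟨hmono, fun R hR ↦ ⟨√(((n : ℝ) - 2) / n) / R * y 1 R, ?_, fun σ hσ ↦ ?_⟩⟩
  · have hn' : (0 : ℝ) < ((n : ℝ) - 2) / n := by
      have : (2 : ℝ) < n := by exact_mod_cast hn
      exact div_pos (by linarith) (by linarith)
    exact mul_pos (div_pos (Real.sqrt_pos.2 hn') hR) ((hsol 1 h1).pos hR)
  have hσI : σ ∈ Icc (0 : ℝ) 1 := Ioc_subset_Icc_self hσ
  have hle : y 1 R ≤ y σ R := by
    rcases hσ.2.eq_or_lt with rfl | hlt
    · rfl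
    · exact (hmono σ hσI 1 h1 hlt R hR).le
  refine ⟨(hsol σ hσI).nonneg R hR.le, (hsol σ hσI).le_sqrt_one_sub hn.le hσ.1 hR ?_⟩
  gcongr

/-- monotonicity in `σ` of the family `y_σ` of radial soliton solutions and
the uniform estimate `0 ≤ y_σ(R) ≤ √(1 − σ²/(C−c₀)²)` for a constant `c₀ = c₀(n,C,R) > 0`. -/
theorem stmt_11 (n : ℕ) (hn : 2 < n) (C : ℝ) (hC : 1 < C) (y : ℝ → ℝ → ℝ)
    (hy : ∀ σ ∈ Icc (0 : ℝ) 1,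
      ContDiffOn ℝ 1 (y σ) (Ici 0) ∧
      y σ 0 = 0 ∧
      (∀ r > (0 : ℝ),
        2 / ((n : ℝ) * (1 - y σ r ^ 2)) * (y σ r / r) *
            (deriv (y σ) r / (1 - y σ r ^ 2) + ((n : ℝ) - 2) / 2 * (y σ r / r)) =
          (C - σ / Real.sqrt (1 - y σ r ^ 2)) ^ 2) ∧
      (∀ r ≥ (0 : ℝ), 0 ≤ y σ r ∧ y σ r < Real.sqrt (1 - σ ^ 2 / C ^ 2)) ∧
      (∀ r ≥ (0 : ℝ), 0 < derivWithin (y σ) (Ici 0) r) ∧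
      derivWithin (y σ) (Ici 0) 0 = C - σ) :
    (∀ σ ∈ Icc (0 : ℝ) 1, ∀ σ' ∈ Icc (0 : ℝ) 1, σ < σ' →
      ∀ r > (0 : ℝ), y σ' r < y σ r) ∧
    (∀ R > (0 : ℝ), ∃ c₀ : ℝ, 0 < c₀ ∧
      ∀ σ ∈ Ioc (0 : ℝ) 1,
        0 ≤ y σ R ∧ y σ R ≤ Real.sqrt (1 - σ ^ 2 / (C - c₀) ^ 2)) :=
  stmt_11_general n hn C y hy
end

section
/- Let A₀ < 0 and B₀ > 0 be constants and r₀ ∈ ℝ. If z : (r₀, ∞) → ℝ is a positive differentiable function satisfying z'(r) = A₀ z(r)² + B₀ for all r > r₀, then z(r) → √(−B₀/A₀) as r → ∞. -/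
open Set Filter

set_option maxHeartbeats 1000000

/-- Forward invariance of `z ≤ L`. -/
lemma stmt16_stay_le (A₀ B₀ : ℝ) (hA : A₀ < 0) (r₀ L : ℝ) (hL : 0 < L)
    (hroot : A₀ * L ^ 2 + B₀ = 0) (z : ℝ → ℝ)
    (hode : ∀ r > r₀, HasDerivAt z (A₀ * z r ^ 2 + B₀) r)
    {a : ℝ} (ha : r₀ < a) (hza : z a ≤ L) : ∀ b, a ≤ b → z b ≤ L := by
  intro b hab
  by_contra hzb
  push_neg at hzb
  have hzc : ContinuousOn z (Ici a) := fun t ht =>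
    ((hode t (lt_of_lt_of_le ha ht)).continuousAt).continuousWithinAt
  have hZ : Continuous (fun t => z (max t a)) :=
    hzc.comp_continuous (continuous_id.max continuous_const) (fun t => le_max_right t a)
  set S : Set ℝ := Icc a b ∩ (fun t => z (max t a)) ⁻¹' (Iic L) with hS
  have hScl : IsClosed S := isClosed_Icc.inter (isClosed_Iic.preimage hZ)
  have haS : a ∈ S := by
    refine ⟨⟨le_refl a, hab⟩, ?_⟩
    simpa using hza
  have hSne : S.Nonempty := ⟨a, haS⟩
  have hSbdd : BddAbove S := ⟨b, fun t ht => ht.1.2⟩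
  set s := sSup S with hs
  have hsS : s ∈ S := hScl.csSup_mem hSne hSbdd
  have hzs : z s ≤ L := by
    have := hsS.2
    simpa [max_eq_left hsS.1.1] using this
  have hsb : s ≤ b := hsS.1.2
  have has : a ≤ s := hsS.1.1
  have hsltb : s < b := lt_of_le_of_ne hsb (fun h => by rw [h] at hzs; linarith)
  -- on (s, b], z > L
  have hgt : ∀ t, s < t → t ≤ b → L < z t := by
    intro t hst htb
    by_contra hzt
    push_neg at hzt
    have htS : t ∈ S := by
      refine ⟨⟨le_trans has (le_of_lt hst), htb⟩, ?_⟩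
      simpa [max_eq_left (le_trans has (le_of_lt hst))] using hzt
    exact absurd (le_csSup hSbdd htS) (not_le.mpr hst)
  have hanti : StrictAntiOn z (Icc s b) := by
    apply strictAntiOn_of_deriv_neg (convex_Icc s b)
    · exact hzc.mono (Icc_subset_Ici_self.trans (Ici_subset_Ici.mpr has))
    · intro x hx
      rw [interior_Icc] at hx
      have hxr : r₀ < x := lt_of_lt_of_le ha (le_trans has (le_of_lt hx.1))
      have hd := hode x hxr
      rw [hd.deriv]
      have hzx : L < z x := hgt x hx.1 (le_of_lt hx.2)
      nlinarith [mul_pos (neg_pos.mpr hA) (sub_pos.mpr (by nlinarith : L ^ 2 < z x ^ 2))]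
  have := hanti ⟨le_refl s, le_of_lt hsltb⟩ ⟨le_of_lt hsltb, le_refl b⟩ hsltb
  linarith

/-- Forward invariance of `L ≤ z`. -/
lemma stmt16_stay_ge (A₀ B₀ : ℝ) (hA : A₀ < 0) (r₀ L : ℝ) (hL : 0 < L)
    (hroot : A₀ * L ^ 2 + B₀ = 0) (z : ℝ → ℝ)
    (hpos : ∀ r > r₀, 0 < z r)
    (hode : ∀ r > r₀, HasDerivAt z (A₀ * z r ^ 2 + B₀) r)
    {a : ℝ} (ha : r₀ < a) (hza : L ≤ z a) : ∀ b, a ≤ b → L ≤ z b := by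
  intro b hab
  by_contra hzb
  push_neg at hzb
  have hzc : ContinuousOn z (Ici a) := fun t ht =>
    ((hode t (lt_of_lt_of_le ha ht)).continuousAt).continuousWithinAt
  have hZ : Continuous (fun t => z (max t a)) :=
    hzc.comp_continuous (continuous_id.max continuous_const) (fun t => le_max_right t a)
  set S : Set ℝ := Icc a b ∩ (fun t => z (max t a)) ⁻¹' (Ici L) with hS
  have hScl : IsClosed S := isClosed_Icc.inter (isClosed_Ici.preimage hZ)
  have haS : a ∈ S := by
    refine ⟨⟨le_refl a, hab⟩, ?_⟩
    simpa using hza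
  have hSne : S.Nonempty := ⟨a, haS⟩
  have hSbdd : BddAbove S := ⟨b, fun t ht => ht.1.2⟩
  set s := sSup S with hs
  have hsS : s ∈ S := hScl.csSup_mem hSne hSbdd
  have hzs : L ≤ z s := by
    have := hsS.2
    simpa [max_eq_left hsS.1.1] using this
  have hsb : s ≤ b := hsS.1.2
  have has : a ≤ s := hsS.1.1
  have hsltb : s < b := lt_of_le_of_ne hsb (fun h => by rw [h] at hzs; linarith)
  have hlt : ∀ t, s < t → t ≤ b → z t < L := by
    intro t hst htb
    by_contra hzt
    push_neg at hzt
    have htS : t ∈ S := by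
      refine ⟨⟨le_trans has (le_of_lt hst), htb⟩, ?_⟩
      simpa [max_eq_left (le_trans has (le_of_lt hst))] using hzt
    exact absurd (le_csSup hSbdd htS) (not_le.mpr hst)
  have hmono : StrictMonoOn z (Icc s b) := by
    apply strictMonoOn_of_deriv_pos (convex_Icc s b)
    · exact hzc.mono (Icc_subset_Ici_self.trans (Ici_subset_Ici.mpr has))
    · intro x hx
      rw [interior_Icc] at hx
      have hxr : r₀ < x := lt_of_lt_of_le ha (le_trans has (le_of_lt hx.1))
      have hd := hode x hxr
      rw [hd.deriv]
      have hzx : z x < L := hlt x hx.1 (le_of_lt hx.2)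
      have hzx0 : 0 < z x := hpos x hxr
      nlinarith [mul_pos (neg_pos.mpr hA) (sub_pos.mpr (by nlinarith : z x ^ 2 < L ^ 2))]
  have := hmono ⟨le_refl s, le_of_lt hsltb⟩ ⟨le_of_lt hsltb, le_refl b⟩ hsltb
  linarith

/-- a positive solution of `z' = A₀z² + B₀` with `A₀ < 0 < B₀` tends to
`√(−B₀/A₀)` at infinity. -/
theorem stmt_16 (A₀ B₀ : ℝ) (hA : A₀ < 0) (hB : 0 < B₀) (r₀ : ℝ) (z : ℝ → ℝ)
    (hpos : ∀ r > r₀, 0 < z r)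
    (hode : ∀ r > r₀, HasDerivAt z (A₀ * z r ^ 2 + B₀) r) :
    Tendsto z atTop (nhds (Real.sqrt (-B₀ / A₀))) := by
  set L := Real.sqrt (-B₀ / A₀) with hLdef
  have hA0 : A₀ ≠ 0 := ne_of_lt hA
  have hq : 0 < -B₀ / A₀ := div_pos_of_neg_of_neg (by linarith) hA
  have hL0 : 0 < L := Real.sqrt_pos.mpr hq
  have hLsq : L ^ 2 = -B₀ / A₀ := Real.sq_sqrt (le_of_lt hq)
  have hroot : A₀ * L ^ 2 + B₀ = 0 := by
    rw [hLsq]; field_simp; ring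
  clear_value L
  set r₁ := r₀ + 1 with hr₁def
  have hr₁ : r₀ < r₁ := by linarith
  have hzc : ContinuousOn z (Ici r₁) := fun t ht =>
    ((hode t (lt_of_lt_of_le hr₁ ht)).continuousAt).continuousWithinAt
  rcases le_or_gt (z r₁) L with hcase | hcase
  · -- z stays ≤ L, monotone increasing
    have hle : ∀ r, r₁ ≤ r → z r ≤ L :=
      stmt16_stay_le A₀ B₀ hA r₀ L hL0 hroot z hode hr₁ hcase
    have hmono : MonotoneOn z (Ici r₁) := by
      apply monotoneOn_of_deriv_nonneg (convex_Ici r₁) hzc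
      · intro x hx
        rw [interior_Ici] at hx
        exact ((hode x (lt_trans hr₁ hx)).differentiableAt).differentiableWithinAt
      intro x hx
      rw [interior_Ici] at hx
      have hxr : r₀ < x := lt_trans hr₁ hx
      rw [(hode x hxr).deriv]
      have h1 : 0 < z x := hpos x hxr
      have h2 : z x ≤ L := hle x (le_of_lt hx)
      nlinarith [mul_nonneg (le_of_lt (neg_pos.mpr hA)) (sub_nonneg.mpr (by nlinarith : z x ^ 2 ≤ L ^ 2))]
    set w : ℝ → ℝ := fun r => z (max r r₁) with hw
    have hwmono : Monotone w := fun r s hrs =>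
      hmono (le_max_right r r₁) (le_max_right s r₁) (max_le_max hrs le_rfl)
    have hwbdd : BddAbove (Set.range w) := by
      refine ⟨L, ?_⟩
      rintro y ⟨r, rfl⟩
      exact hle _ (le_max_right r r₁)
    have hwt : Tendsto w atTop (nhds (⨆ r, w r)) := tendsto_atTop_ciSup hwmono hwbdd
    set c := ⨆ r, w r with hc
    have hzw : z =ᶠ[atTop] w := by
      filter_upwards [eventually_ge_atTop r₁] with r hr
      simp [hw, max_eq_left hr]
    have hzt : Tendsto z atTop (nhds c) := hwt.congr' hzw.symm
    have hcle : c ≤ L := ciSup_le (fun r => hle _ (le_max_right r r₁))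
    have hwlec : ∀ r, w r ≤ c := fun r => le_ciSup hwbdd r
    have hcpos : 0 < c := lt_of_lt_of_le (hpos r₁ hr₁) (by simpa [hw] using hwlec r₁)
    clear_value c
    rcases eq_or_lt_of_le hcle with hceq | hclt
    · rwa [hceq] at hzt
    · exfalso
      set ε := A₀ * c ^ 2 + B₀ with hε
      clear_value ε
      have hsq : c ^ 2 < L ^ 2 := by nlinarith
      have hεpos : 0 < ε := by
        nlinarith [mul_pos (neg_pos.mpr hA) (sub_pos.mpr hsq)]
      -- z' ≥ ε on [r₁, ∞)
      have hderiv : ∀ x, r₁ < x → ε ≤ A₀ * z x ^ 2 + B₀ := by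
        intro x hx
        have hxr : r₀ < x := lt_trans hr₁ hx
        have h1 : 0 < z x := hpos x hxr
        have h2 : z x ≤ c := by simpa [hw, max_eq_left (le_of_lt hx)] using hwlec x
        nlinarith [mul_nonneg (le_of_lt (neg_pos.mpr hA)) (sub_nonneg.mpr (by nlinarith : z x ^ 2 ≤ c ^ 2))]
      have hg : MonotoneOn (fun r => z r - ε * r) (Ici r₁) := by
        apply monotoneOn_of_deriv_nonneg (convex_Ici r₁)
        · exact hzc.sub ((continuous_const.mul continuous_id).continuousOn)
        · intro x hx
          rw [interior_Ici] at hx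
          exact (((hode x (lt_trans hr₁ hx)).sub
            (by simpa using (hasDerivAt_id x).const_mul ε)).differentiableAt).differentiableWithinAt
        · intro x hx
          rw [interior_Ici] at hx
          have hd : HasDerivAt (fun r => z r - ε * r) (A₀ * z x ^ 2 + B₀ - ε) x :=
            (hode x (lt_trans hr₁ hx)).sub (by simpa using (hasDerivAt_id x).const_mul ε)
          rw [hd.deriv]
          linarith [hderiv x hx]
      have hε0 : ε ≠ 0 := ne_of_gt hεpos
      obtain ⟨R, hRge, heq⟩ : ∃ R, r₁ ≤ R ∧ ε * (R - r₁) = L + 1 - z r₁ := by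
        refine ⟨r₁ + (L + 1 - z r₁) / ε, ?_, ?_⟩
        · have h0 : 0 ≤ (L + 1 - z r₁) / ε := div_nonneg (by linarith) (le_of_lt hεpos)
          linarith
        · field_simp; ring
      have hmle := hg (self_mem_Ici) (mem_Ici.mpr hRge) hRge
      simp only at hmle
      have hzR : z R ≤ L := hle R hRge
      nlinarith [hmle, heq, hzR]
  · -- z stays ≥ L, monotone decreasing
    have hge : ∀ r, r₁ ≤ r → L ≤ z r :=
      stmt16_stay_ge A₀ B₀ hA r₀ L hL0 hroot z hpos hode hr₁ (le_of_lt hcase)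
    have hanti : AntitoneOn z (Ici r₁) := by
      apply antitoneOn_of_deriv_nonpos (convex_Ici r₁) hzc
      · intro x hx
        rw [interior_Ici] at hx
        exact ((hode x (lt_trans hr₁ hx)).differentiableAt).differentiableWithinAt
      intro x hx
      rw [interior_Ici] at hx
      have hxr : r₀ < x := lt_trans hr₁ hx
      rw [(hode x hxr).deriv]
      have h2 : L ≤ z x := hge x (le_of_lt hx)
      nlinarith [mul_nonneg (le_of_lt (neg_pos.mpr hA)) (sub_nonneg.mpr (by nlinarith : L ^ 2 ≤ z x ^ 2))]
    set w : ℝ → ℝ := fun r => z (max r r₁) with hw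
    have hwanti : Antitone w := fun r s hrs =>
      hanti (le_max_right r r₁) (le_max_right s r₁) (max_le_max hrs le_rfl)
    have hwbdd : BddBelow (Set.range w) := by
      refine ⟨L, ?_⟩
      rintro y ⟨r, rfl⟩
      exact hge _ (le_max_right r r₁)
    have hwt : Tendsto w atTop (nhds (⨅ r, w r)) := tendsto_atTop_ciInf hwanti hwbdd
    set c := ⨅ r, w r with hc
    have hzw : z =ᶠ[atTop] w := by
      filter_upwards [eventually_ge_atTop r₁] with r hr
      simp [hw, max_eq_left hr]
    have hzt : Tendsto z atTop (nhds c) := hwt.congr' hzw.symm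
    have hcge : L ≤ c := le_ciInf (fun r => hge _ (le_max_right r r₁))
    have hwgec : ∀ r, c ≤ w r := fun r => ciInf_le hwbdd r
    clear_value c
    rcases eq_or_lt_of_le hcge with hceq | hclt
    · rwa [← hceq] at hzt
    · exfalso
      set ε := -(A₀ * c ^ 2 + B₀) with hε
      clear_value ε
      have hc0 : 0 < c := lt_trans hL0 hclt
      have hsq : L ^ 2 < c ^ 2 := by nlinarith
      have hεpos : 0 < ε := by
        nlinarith [mul_pos (neg_pos.mpr hA) (sub_pos.mpr hsq)]
      have hderiv : ∀ x, r₁ < x → A₀ * z x ^ 2 + B₀ ≤ -ε := by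
        intro x hx
        have h2 : c ≤ z x := by simpa [hw, max_eq_left (le_of_lt hx)] using hwgec x
        have hsq2 : c ^ 2 ≤ z x ^ 2 := by nlinarith
        nlinarith [mul_nonneg (le_of_lt (neg_pos.mpr hA)) (sub_nonneg.mpr hsq2)]
      have hg : AntitoneOn (fun r => z r + ε * r) (Ici r₁) := by
        apply antitoneOn_of_deriv_nonpos (convex_Ici r₁)
        · exact hzc.add ((continuous_const.mul continuous_id).continuousOn)
        · intro x hx
          rw [interior_Ici] at hx
          exact (((hode x (lt_trans hr₁ hx)).add
            (by simpa using (hasDerivAt_id x).const_mul ε)).differentiableAt).differentiableWithinAt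
        · intro x hx
          rw [interior_Ici] at hx
          have hd : HasDerivAt (fun r => z r + ε * r) (A₀ * z x ^ 2 + B₀ + ε) x :=
            (hode x (lt_trans hr₁ hx)).add (by simpa using (hasDerivAt_id x).const_mul ε)
          rw [hd.deriv]
          linarith [hderiv x hx]
      have hε0 : ε ≠ 0 := ne_of_gt hεpos
      have hz1 : L ≤ z r₁ := hge r₁ le_rfl
      obtain ⟨R, hRge, heq⟩ : ∃ R, r₁ ≤ R ∧ ε * (R - r₁) = z r₁ + 1 - L := by
        refine ⟨r₁ + (z r₁ + 1 - L) / ε, ?_, ?_⟩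
        · have h0 : 0 ≤ (z r₁ + 1 - L) / ε := div_nonneg (by linarith) (le_of_lt hεpos)
          linarith
        · field_simp; ring
      have hmle := hg (self_mem_Ici) (mem_Ici.mpr hRge) hRge
      simp only at hmle
      have hzR : L ≤ z R := hge R hRge
      nlinarith [hmle, heq, hzR]
end

section
/- Let A, B : (0, ∞) → ℝ be continuous functions with A(r) → A₀ as r → ∞ for some constant A₀ < 0 and B(r) → B₀ as r → ∞ for some constant B₀ > 0. If z : (0, ∞) → ℝ is a positive differentiable function satisfying z'(r) = A(r) z(r)² + B(r) for all r > 0, then z(r) → √(−B₀/A₀) as r → ∞. -/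
open Set Filter

lemma hasDerivAt_c_mul (c r : ℝ) : HasDerivAt (fun x : ℝ => c * x) c r := by
  simpa using (hasDerivAt_id r).const_mul c

lemma stay_below (z F : ℝ → ℝ) (R M c : ℝ) (hR : 0 < R) (hc : 0 < c)
    (hz : ∀ r > (0:ℝ), HasDerivAt z (F r) r)
    (hF : ∀ r ≥ R, M ≤ z r → F r ≤ -c)
    (r₀ : ℝ) (hr₀ : R ≤ r₀) (h0 : z r₀ ≤ M) :
    ∀ r ≥ r₀, z r ≤ M := by
  intro s hs
  by_contra hzs
  push_neg at hzs
  have hr₀pos : 0 < r₀ := lt_of_lt_of_le hR hr₀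
  have hcont : ContinuousOn z (Icc r₀ s) := fun x hx =>
    ((hz x (lt_of_lt_of_le hr₀pos hx.1)).continuousAt).continuousWithinAt
  set S : Set ℝ := Icc r₀ s ∩ z ⁻¹' (Iic M) with hSdef
  have hSsub : S ⊆ Icc r₀ s := inter_subset_left
  have hSne : S.Nonempty := ⟨r₀, ⟨le_refl _, hs⟩, h0⟩
  have hScl : IsClosed S := hcont.preimage_isClosed_of_isClosed isClosed_Icc isClosed_Iic
  have hScomp : IsCompact S := isCompact_Icc.of_isClosed_subset hScl hSsub
  set t := sSup S with htdef
  have htS : t ∈ S := hScomp.sSup_mem hSne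
  have htle : z t ≤ M := htS.2
  have ht1 : r₀ ≤ t := htS.1.1
  have hts : t ≤ s := htS.1.2
  have htlt : t < s := lt_of_le_of_ne hts (fun h => by rw [h] at htle; linarith)
  have hIoc : ∀ u ∈ Ioc t s, M < z u := by
    intro u hu
    by_contra hzu
    push_neg at hzu
    have huS : u ∈ S := ⟨⟨le_trans ht1 hu.1.le, hu.2⟩, hzu⟩
    exact absurd (le_csSup hScomp.bddAbove huS) (not_le.2 hu.1)
  have hanti : StrictAntiOn z (Icc t s) := by
    apply strictAntiOn_of_deriv_neg (convex_Icc t s)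
      (hcont.mono (Icc_subset_Icc ht1 le_rfl))
    intro x hx
    rw [interior_Icc] at hx
    have hx0 : 0 < x := lt_trans (lt_of_lt_of_le hr₀pos ht1) hx.1
    rw [(hz x hx0).deriv]
    have hxR : R ≤ x := le_trans (le_trans hr₀ ht1) hx.1.le
    have := hF x hxR (hIoc x ⟨hx.1, hx.2.le⟩).le
    linarith
  have := hanti ⟨le_rfl, hts⟩ ⟨htlt.le, le_rfl⟩ htlt
  linarith

lemma force_below (z F : ℝ → ℝ) (R M c : ℝ) (hR : 0 < R) (hc : 0 < c)
    (hz : ∀ r > (0:ℝ), HasDerivAt z (F r) r)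
    (hlow : ∀ r ≥ R, 0 < z r)
    (hF : ∀ r ≥ R, M ≤ z r → F r ≤ -c) :
    ∃ r₀ ≥ R, z r₀ ≤ M := by
  by_contra h
  push_neg at h
  set g : ℝ → ℝ := fun r => z r + (c/2) * r with hgdef
  have hcont : ContinuousOn g (Ici R) := fun x hx =>
    (((hz x (lt_of_lt_of_le hR hx)).continuousAt).add
      ((continuous_const.mul continuous_id).continuousAt)).continuousWithinAt
  have hanti : StrictAntiOn g (Ici R) := by
    apply strictAntiOn_of_deriv_neg (convex_Ici R) hcont
    intro x hx
    rw [interior_Ici] at hx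
    have hx0 : 0 < x := lt_trans hR hx
    have hgd : HasDerivAt g (F x + c/2) x := (hz x hx0).add (hasDerivAt_c_mul (c/2) x)
    rw [hgd.deriv]
    have := hF x hx.le (h x hx.le).le
    linarith
  have hzR : 0 < z R := hlow R le_rfl
  set T := R + 2 * z R / c + 1 with hTdef
  have hTR : R < T := by
    have h1 : 0 < 2 * z R / c := by positivity
    simp only [hTdef]; linarith
  have hgT := hanti (self_mem_Ici) (le_of_lt hTR) hTR
  have hzT := hlow T hTR.le
  have hdiv : c * (2 * z R / c) = 2 * z R := mul_div_cancel₀ _ (ne_of_gt hc)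
  simp only [hgdef, hTdef] at hgT
  nlinarith [hgT, hzT, hdiv, hc]

lemma stay_above (z F : ℝ → ℝ) (R M c : ℝ) (hR : 0 < R) (hc : 0 < c)
    (hz : ∀ r > (0:ℝ), HasDerivAt z (F r) r)
    (hF : ∀ r ≥ R, z r ≤ M → c ≤ F r)
    (r₀ : ℝ) (hr₀ : R ≤ r₀) (h0 : M ≤ z r₀) :
    ∀ r ≥ r₀, M ≤ z r := by
  intro s hs
  by_contra hzs
  push_neg at hzs
  have hr₀pos : 0 < r₀ := lt_of_lt_of_le hR hr₀
  have hcont : ContinuousOn z (Icc r₀ s) := fun x hx =>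
    ((hz x (lt_of_lt_of_le hr₀pos hx.1)).continuousAt).continuousWithinAt
  set S : Set ℝ := Icc r₀ s ∩ z ⁻¹' (Ici M) with hSdef
  have hSsub : S ⊆ Icc r₀ s := inter_subset_left
  have hSne : S.Nonempty := ⟨r₀, ⟨le_refl _, hs⟩, h0⟩
  have hScl : IsClosed S := hcont.preimage_isClosed_of_isClosed isClosed_Icc isClosed_Ici
  have hScomp : IsCompact S := isCompact_Icc.of_isClosed_subset hScl hSsub
  set t := sSup S with htdef
  have htS : t ∈ S := hScomp.sSup_mem hSne
  have htle : M ≤ z t := htS.2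
  have ht1 : r₀ ≤ t := htS.1.1
  have hts : t ≤ s := htS.1.2
  have htlt : t < s := lt_of_le_of_ne hts (fun h => by rw [h] at htle; linarith)
  have hIoc : ∀ u ∈ Ioc t s, z u < M := by
    intro u hu
    by_contra hzu
    push_neg at hzu
    have huS : u ∈ S := ⟨⟨le_trans ht1 hu.1.le, hu.2⟩, hzu⟩
    exact absurd (le_csSup hScomp.bddAbove huS) (not_le.2 hu.1)
  have hmono : StrictMonoOn z (Icc t s) := by
    apply strictMonoOn_of_deriv_pos (convex_Icc t s)
      (hcont.mono (Icc_subset_Icc ht1 le_rfl))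
    intro x hx
    rw [interior_Icc] at hx
    have hx0 : 0 < x := lt_trans (lt_of_lt_of_le hr₀pos ht1) hx.1
    rw [(hz x hx0).deriv]
    have hxR : R ≤ x := le_trans (le_trans hr₀ ht1) hx.1.le
    have := hF x hxR (hIoc x ⟨hx.1, hx.2.le⟩).le
    linarith
  have := hmono ⟨le_rfl, hts⟩ ⟨htlt.le, le_rfl⟩ htlt
  linarith

lemma force_above (z F : ℝ → ℝ) (R M c : ℝ) (hR : 0 < R) (hc : 0 < c)
    (hz : ∀ r > (0:ℝ), HasDerivAt z (F r) r)
    (hF : ∀ r ≥ R, z r ≤ M → c ≤ F r) :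
    ∃ r₀ ≥ R, M ≤ z r₀ := by
  by_contra h
  push_neg at h
  set g : ℝ → ℝ := fun r => z r - (c/2) * r with hgdef
  have hcont : ContinuousOn g (Ici R) := fun x hx =>
    (((hz x (lt_of_lt_of_le hR hx)).continuousAt).sub
      ((continuous_const.mul continuous_id).continuousAt)).continuousWithinAt
  have hmono : StrictMonoOn g (Ici R) := by
    apply strictMonoOn_of_deriv_pos (convex_Ici R) hcont
    intro x hx
    rw [interior_Ici] at hx
    have hx0 : 0 < x := lt_trans hR hx
    have hgd : HasDerivAt g (F x - c/2) x := (hz x hx0).sub (hasDerivAt_c_mul (c/2) x)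
    rw [hgd.deriv]
    have := hF x hx.le (h x hx.le).le
    linarith
  have hzR : z R < M := h R le_rfl
  set T := R + 2 * (M - z R) / c + 1 with hTdef
  have hTR : R < T := by
    have h1 : 0 < 2 * (M - z R) / c := div_pos (by linarith) hc
    simp only [hTdef]; linarith
  have hgT := hmono (self_mem_Ici) (le_of_lt hTR) hTR
  have hzT : z T < M := h T hTR.le
  have hdiv : c * (2 * (M - z R) / c) = 2 * (M - z R) := mul_div_cancel₀ _ (ne_of_gt hc)
  simp only [hgdef, hTdef] at hgT
  nlinarith [hgT, hzT, hdiv, hc]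

lemma upper_key (A₀ B₀ L ε : ℝ) (hA : A₀ < 0) (hL : 0 < L) (hε : 0 < ε)
    (hnull : A₀ * L ^ 2 + B₀ = 0) :
    ∃ η > 0, ∃ c > 0, ∀ a b w : ℝ, a ≤ A₀ + η → b ≤ B₀ + η → L + ε ≤ w →
      a * w ^ 2 + b ≤ -c := by
  have hg0 : 0 < (-A₀) * (2*L*ε + ε^2) := mul_pos (neg_pos.2 hA) (by positivity)
  refine ⟨(-A₀) * (2*L*ε + ε^2) / (2*((L+ε)^2+1)), div_pos hg0 (by positivity),
    (-A₀) * (2*L*ε + ε^2) / 2, by linarith, ?_⟩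
  set η := (-A₀) * (2*L*ε + ε^2) / (2*((L+ε)^2+1)) with hηdef
  intro a b w ha hb hw
  have hw2 : (L+ε)^2 ≤ w^2 := by nlinarith
  have hηlt : η < -A₀ := by
    rw [hηdef, div_lt_iff₀ (by positivity)]
    nlinarith [sq_nonneg L, sq_nonneg ε, mul_pos hL hε]
  have hηneg : A₀ + η < 0 := by linarith
  have hB0 : B₀ = -(A₀ * L^2) := by linarith
  have heq : (A₀+η)*((L+ε)^2) + (B₀+η) = -((-A₀) * (2*L*ε + ε^2) / 2) := by
    rw [hηdef, hB0]
    field_simp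
    ring
  have step1 : a * w^2 ≤ (A₀+η) * w^2 := mul_le_mul_of_nonneg_right ha (sq_nonneg w)
  have step2 : (A₀+η) * w^2 ≤ (A₀+η) * (L+ε)^2 := by
    nlinarith [mul_nonneg (neg_nonneg.2 hηneg.le) (sub_nonneg.2 hw2)]
  linarith

lemma lower_key (A₀ B₀ L ε : ℝ) (hA : A₀ < 0) (hL : 0 < L) (hε : 0 < ε) (hεL : ε < L)
    (hnull : A₀ * L ^ 2 + B₀ = 0) :
    ∃ η > 0, ∃ c > 0, ∀ a b w : ℝ, A₀ - η ≤ a → B₀ - η ≤ b → 0 < w → w ≤ L - ε →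
      c ≤ a * w ^ 2 + b := by
  have hg0 : 0 < (-A₀) * (2*L*ε - ε^2) :=
    mul_pos (neg_pos.2 hA) (by nlinarith)
  refine ⟨(-A₀) * (2*L*ε - ε^2) / (2*((L-ε)^2+1)), div_pos hg0 (by positivity),
    (-A₀) * (2*L*ε - ε^2) / 2, by linarith, ?_⟩
  set η := (-A₀) * (2*L*ε - ε^2) / (2*((L-ε)^2+1)) with hηdef
  intro a b w ha hb hw0 hw
  have hη0 : 0 < η := div_pos hg0 (by positivity)
  have hw2 : w^2 ≤ (L-ε)^2 := by nlinarith
  have hηneg : A₀ - η < 0 := by linarith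
  have hB0 : B₀ = -(A₀ * L^2) := by linarith
  have heq : (A₀-η)*((L-ε)^2) + (B₀-η) = (-A₀) * (2*L*ε - ε^2) / 2 := by
    rw [hηdef, hB0]
    field_simp
    ring
  have step1 : (A₀-η) * w^2 ≤ a * w^2 := mul_le_mul_of_nonneg_right ha (sq_nonneg w)
  have step2 : (A₀-η) * (L-ε)^2 ≤ (A₀-η) * w^2 := by
    nlinarith [mul_nonneg (neg_nonneg.2 hηneg.le) (sub_nonneg.2 hw2)]
  linarith

/-- a positive solution of `z' = A(r)z² + B(r)` on `(0,∞)`, with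
`A → A₀ < 0` and `B → B₀ > 0` at infinity, tends to `√(−B₀/A₀)`. -/
theorem stmt_18 (A B : ℝ → ℝ) (A₀ B₀ : ℝ) (hA : A₀ < 0) (hB : 0 < B₀)
    (hAcont : ContinuousOn A (Ioi 0)) (hBcont : ContinuousOn B (Ioi 0))
    (hAlim : Tendsto A atTop (nhds A₀)) (hBlim : Tendsto B atTop (nhds B₀))
    (z : ℝ → ℝ)
    (hpos : ∀ r > (0 : ℝ), 0 < z r)
    (hode : ∀ r > (0 : ℝ), HasDerivAt z (A r * z r ^ 2 + B r) r) :
    Tendsto z atTop (nhds (Real.sqrt (-B₀ / A₀))) := by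
  set L := Real.sqrt (-B₀ / A₀) with hLdef
  have hfrac : 0 < -B₀ / A₀ := div_pos_of_neg_of_neg (by linarith) hA
  have hL : 0 < L := Real.sqrt_pos.2 hfrac
  have hL2 : L ^ 2 = -B₀ / A₀ := Real.sq_sqrt hfrac.le
  have hA0 : A₀ ≠ 0 := ne_of_lt hA
  have hnull : A₀ * L ^ 2 + B₀ = 0 := by
    rw [hL2]; field_simp; ring
  rw [Metric.tendsto_atTop]
  intro ε hε
  set ε' := min (ε/2) (L/2) with hε'def
  have hε'0 : 0 < ε' := lt_min (by linarith) (by linarith)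
  have hε'L : ε' < L := lt_of_le_of_lt (min_le_right _ _) (by linarith)
  have hε'ε : ε' < ε := lt_of_le_of_lt (min_le_left _ _) (by linarith)
  obtain ⟨η₁, hη₁, c₁, hc₁, hkey₁⟩ := upper_key A₀ B₀ L ε' hA hL hε'0 hnull
  obtain ⟨η₂, hη₂, c₂, hc₂, hkey₂⟩ := lower_key A₀ B₀ L ε' hA hL hε'0 hε'L hnull
  have hev : ∀ᶠ r in atTop, (A r < A₀ + η₁ ∧ A₀ - η₂ < A r) ∧
      (B r < B₀ + η₁ ∧ B₀ - η₂ < B r) := by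
    filter_upwards [hAlim.eventually_lt_const (by linarith : A₀ < A₀ + η₁),
      hAlim.eventually_const_lt (by linarith : A₀ - η₂ < A₀),
      hBlim.eventually_lt_const (by linarith : B₀ < B₀ + η₁),
      hBlim.eventually_const_lt (by linarith : B₀ - η₂ < B₀)] with r h1 h2 h3 h4
    exact ⟨⟨h1, h2⟩, ⟨h3, h4⟩⟩
  obtain ⟨R₀, hR₀⟩ := eventually_atTop.1 hev
  set R := max R₀ 1 with hRdef
  have hR1 : 0 < R := lt_of_lt_of_le one_pos (le_max_right _ _)
  have hRR₀ : ∀ r ≥ R, (A r < A₀ + η₁ ∧ A₀ - η₂ < A r) ∧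
      (B r < B₀ + η₁ ∧ B₀ - η₂ < B r) := fun r hr => hR₀ r (le_trans (le_max_left _ _) hr)
  set F : ℝ → ℝ := fun r => A r * z r ^ 2 + B r with hFdef
  have hz : ∀ r > (0:ℝ), HasDerivAt z (F r) r := hode
  have hF₁ : ∀ r ≥ R, L + ε' ≤ z r → F r ≤ -c₁ := by
    intro r hr hm
    exact hkey₁ (A r) (B r) (z r) (hRR₀ r hr).1.1.le (hRR₀ r hr).2.1.le hm
  have hF₂ : ∀ r ≥ R, z r ≤ L - ε' → c₂ ≤ F r := by
    intro r hr hm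
    exact hkey₂ (A r) (B r) (z r) (hRR₀ r hr).1.2.le (hRR₀ r hr).2.2.le
      (hpos r (lt_of_lt_of_le hR1 hr)) hm
  have hlow : ∀ r ≥ R, 0 < z r := fun r hr => hpos r (lt_of_lt_of_le hR1 hr)
  obtain ⟨r₁, hr₁R, hr₁⟩ := force_below z F R (L + ε') c₁ hR1 hc₁ hz hlow hF₁
  have hup : ∀ r ≥ r₁, z r ≤ L + ε' := stay_below z F R (L + ε') c₁ hR1 hc₁ hz hF₁ r₁ hr₁R hr₁
  obtain ⟨r₂, hr₂R, hr₂⟩ := force_above z F R (L - ε') c₂ hR1 hc₂ hz hF₂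
  have hdn : ∀ r ≥ r₂, L - ε' ≤ z r := stay_above z F R (L - ε') c₂ hR1 hc₂ hz hF₂ r₂ hr₂R hr₂
  refine ⟨max r₁ r₂, fun n hn => ?_⟩
  have h1 := hup n (le_trans (le_max_left _ _) hn)
  have h2 := hdn n (le_trans (le_max_right _ _) hn)
  rw [Real.dist_eq, abs_lt]
  constructor <;> linarith
end
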